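/- Let b > 0, let k ≥ 1 and t ≥ 1 be natural numbers, let v ≥ √k · b, and let 0 < λ < 2√2 · v²/b. Let μ be the product measure on ℝ^k each of whose k factors is the Laplace measure with scale b, and let μ^{⊗t} be the t-fold product of μ on (ℝ^k)^t. Then μ^{⊗t}({ω : ∑_{i=1}^{k} ω_{j,i} > λ for all j = 1, …, t}) ≤ exp(−t·λ²/(8v²)). -/

import Mathlib

open MeasureTheory Real

/-- The Laplace measure with scale `b`. -/
noncomputable def laplaceMeasure (b : ℝ) : Measure ℝ :=
  volume.withDensity (fun x => ENNReal.ofReal ((1 / (2 * b)) * Real.exp (-|x| / b)))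

/-!
Chernoff's method. For `0 ≤ s`, Markov's inequality applied to `exp (s ∑ xᵢ)` and independence
of the coordinates bound the one-round tail by `exp (-s λ) · M(s)ᵏ`, where
`M(s) = (1 - s²b²)⁻¹` is the Laplace moment generating function, and `M(s) ≤ exp (2 s²b²)` as
long as `s²b² ≤ 1/2`. With `k b² ≤ v²` the exponent is at most `-s λ + 2 v² s²`, which at
`s = λ / (4 v²)` equals `-λ² / (8 v²)`; the hypothesis `λ < 2√2 v² / b` is exactly
`s²b² < 1/2` for this `s`. The `t` rounds are independent, so the bounds multiply.
-/

open Set ProbabilityTheory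
open scoped ENNReal

lemma integral_exp_mul_sub_abs_div {b s : ℝ} (hb : 0 < b) (hs : |s| < b⁻¹) :
    Integrable (fun x => exp (s * x - |x| / b)) ∧
      ∫ x, exp (s * x - |x| / b) = 2 * b / (1 - s ^ 2 * b ^ 2) := by
  obtain ⟨hs₁, hs₂⟩ := abs_lt.mp hs
  have h_Iic :
      EqOn (fun x => exp (s * x - |x| / b)) (fun x => exp ((s + b⁻¹) * x)) (Iic 0) := by
    intro x hx
    simp only [abs_of_nonpos (mem_Iic.mp hx)]
    ring_nf
  have h_Ioi :
      EqOn (fun x => exp (s * x - |x| / b)) (fun x => exp ((s - b⁻¹) * x)) (Ioi 0) := by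
    intro x hx
    simp only [abs_of_pos (mem_Ioi.mp hx)]
    ring_nf
  have hint_Iic :=
    (integrableOn_exp_mul_Iic (by linarith) 0).congr_fun h_Iic.symm measurableSet_Iic
  have hint_Ioi :=
    (integrableOn_exp_mul_Ioi (by linarith) 0).congr_fun h_Ioi.symm measurableSet_Ioi
  refine ⟨by simpa using hint_Iic.union hint_Ioi, ?_⟩
  rw [← intervalIntegral.integral_Iic_add_Ioi hint_Iic hint_Ioi,
    setIntegral_congr_fun measurableSet_Iic h_Iic, setIntegral_congr_fun measurableSet_Ioi h_Ioi,
    integral_exp_mul_Iic (by linarith), integral_exp_mul_Ioi (by linarith)]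
  simp only [mul_zero, exp_zero]
  have hsb : |s| * b < 1 := by rwa [← lt_div_iff₀ hb, one_div]
  have hsb' : s ^ 2 * b ^ 2 < 1 := by
    rw [← sq_abs, ← mul_pow]
    exact pow_lt_one₀ (by positivity) hsb two_ne_zero
  rw [div_add_div _ _ (by linarith) (by linarith), div_eq_div_iff (by nlinarith) (by linarith)]
  field_simp
  ring

theorem lintegral_exp_mul_laplaceMeasure {b s : ℝ} (hb : 0 < b) (hs : |s| < b⁻¹) :
    ∫⁻ x, ENNReal.ofReal (exp (s * x)) ∂laplaceMeasure b =
      ENNReal.ofReal (1 - s ^ 2 * b ^ 2)⁻¹ := by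
  obtain ⟨hint, hval⟩ := integral_exp_mul_sub_abs_div hb hs
  have hdensity : ∀ x : ℝ, ENNReal.ofReal (1 / (2 * b) * exp (-|x| / b)) *
      ENNReal.ofReal (exp (s * x)) = ENNReal.ofReal ((2 * b)⁻¹ * exp (s * x - |x| / b)) := by
    intro x
    rw [← ENNReal.ofReal_mul (by positivity), mul_assoc, ← exp_add, one_div]
    ring_nf
  rw [laplaceMeasure, lintegral_withDensity_eq_lintegral_mul _ (by fun_prop) (by fun_prop)]
  simp only [Pi.mul_apply, hdensity]
  rw [← ofReal_integral_eq_lintegral_ofReal (hint.const_mul _)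
    (ae_of_all _ fun _ => by positivity), integral_const_mul, hval]
  congr 1
  field_simp

theorem isProbabilityMeasure_laplaceMeasure {b : ℝ} (hb : 0 < b) :
    IsProbabilityMeasure (laplaceMeasure b) :=
  ⟨by simpa using lintegral_exp_mul_laplaceMeasure (s := 0) hb (by simpa using hb)⟩

lemma lintegral_pi_prod_eq_pow {ι α : Type*} [Fintype ι] [MeasurableSpace α] (μ : Measure α)
    [IsProbabilityMeasure μ] {f : α → ℝ≥0∞} (hf : Measurable f) :
    ∫⁻ x, ∏ i, f (x i) ∂Measure.pi (fun _ : ι => μ) = (∫⁻ a, f a ∂μ) ^ Fintype.card ι := by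
  rw [lintegral_prod_eq_prod_lintegral_of_indepFun _ _ (iIndepFun_pi fun _ => hf.aemeasurable)
    fun i => hf.comp (measurable_pi_apply i)]
  simp_rw [(measurePreserving_eval (fun _ : ι => μ) _).lintegral_comp hf]
  rw [Finset.prod_const, Finset.card_univ]

lemma measure_pi_lt_sum_le {ι : Type*} [Fintype ι] (μ : Measure ℝ) [IsProbabilityMeasure μ]
    {s : ℝ} (hs : 0 ≤ s) (lam : ℝ) :
    Measure.pi (fun _ : ι => μ) {x | lam < ∑ i, x i} ≤
      ENNReal.ofReal (exp (-(s * lam))) *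
        (∫⁻ a, ENNReal.ofReal (exp (s * a)) ∂μ) ^ Fintype.card ι := by
  have hmarkov : {x : ι → ℝ | lam < ∑ i, x i}.indicator 1 ≤
      fun x => ENNReal.ofReal (exp (-(s * lam))) * ∏ i, ENNReal.ofReal (exp (s * x i)) := by
    refine indicator_le fun x hx => ?_
    rw [← ENNReal.ofReal_prod_of_nonneg fun _ _ => (exp_pos _).le, ← exp_sum,
      ← ENNReal.ofReal_mul (exp_pos _).le, ← exp_add, ← Finset.mul_sum]
    have : s * lam ≤ s * ∑ i, x i := mul_le_mul_of_nonneg_left (le_of_lt hx) hs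
    exact ENNReal.one_le_ofReal.mpr (one_le_exp (by linarith))
  calc Measure.pi (fun _ : ι => μ) {x | lam < ∑ i, x i}
      = ∫⁻ x, {x : ι → ℝ | lam < ∑ i, x i}.indicator 1 x ∂Measure.pi (fun _ : ι => μ) :=
        (lintegral_indicator_one (measurableSet_lt measurable_const (by fun_prop))).symm
    _ ≤ _ := lintegral_mono hmarkov
    _ = _ := by
      rw [lintegral_const_mul _ (by fun_prop),
        lintegral_pi_prod_eq_pow μ (f := fun a => ENNReal.ofReal (exp (s * a))) (by fun_prop)]

lemma inv_one_sub_le_exp_two_mul {x : ℝ} (hx₀ : 0 ≤ x) (hx : x ≤ 1 / 2) :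
    (1 - x)⁻¹ ≤ exp (2 * x) :=
  calc (1 - x)⁻¹ ≤ 1 + 2 * x := by
        rw [inv_le_iff_one_le_mul₀ (by linarith)]
        nlinarith
    _ ≤ exp (2 * x) := by linarith [add_one_le_exp (2 * x)]

lemma laplaceMeasure_pi_lt_sum_le {ι : Type*} [Fintype ι] {b s : ℝ} (hb : 0 < b) (hs₀ : 0 ≤ s)
    (hs : s ^ 2 * b ^ 2 ≤ 1 / 2) (lam : ℝ) :
    Measure.pi (fun _ : ι => laplaceMeasure b) {x | lam < ∑ i, x i} ≤
      ENNReal.ofReal (exp (-(s * lam) + 2 * Fintype.card ι * s ^ 2 * b ^ 2)) := by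
  have := isProbabilityMeasure_laplaceMeasure hb
  have hsb : |s| < b⁻¹ := by
    rw [abs_of_nonneg hs₀, ← one_div, lt_div_iff₀ hb]
    nlinarith [mul_nonneg hs₀ hb.le]
  calc Measure.pi (fun _ : ι => laplaceMeasure b) {x | lam < ∑ i, x i}
      ≤ ENNReal.ofReal (exp (-(s * lam))) *
          ENNReal.ofReal (1 - s ^ 2 * b ^ 2)⁻¹ ^ Fintype.card ι := by
        rw [← lintegral_exp_mul_laplaceMeasure hb hsb]
        exact measure_pi_lt_sum_le _ hs₀ lam
    _ ≤ ENNReal.ofReal (exp (-(s * lam))) *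
          ENNReal.ofReal (exp (2 * (s ^ 2 * b ^ 2))) ^ Fintype.card ι := by
        gcongr
        exact inv_one_sub_le_exp_two_mul (by positivity) hs
    _ = ENNReal.ofReal (exp (-(s * lam) + 2 * Fintype.card ι * s ^ 2 * b ^ 2)) := by
        rw [← ENNReal.ofReal_pow (exp_pos _).le, ← exp_nat_mul,
          ← ENNReal.ofReal_mul (exp_pos _).le, ← exp_add]
        ring_nf

lemma laplace_sum_tail_bound {ι : Type*} [Fintype ι] {b v lam : ℝ} (hb : 0 < b)
    (hv : √(Fintype.card ι) * b ≤ v) (hlam₁ : 0 < lam) (hlam₂ : lam < 2 * √2 * v ^ 2 / b) :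
    Measure.pi (fun _ : ι => laplaceMeasure b) {x | lam < ∑ i, x i} ≤
      ENNReal.ofReal (exp (-lam ^ 2 / (8 * v ^ 2))) := by
  have hlamb : lam * b < 2 * √2 * v ^ 2 := (lt_div_iff₀ hb).mp hlam₂
  have hv₂ : 0 < v ^ 2 := by nlinarith [sqrt_nonneg 2]
  have hcard : Fintype.card ι * b ^ 2 ≤ v ^ 2 := by
    simpa [mul_pow] using pow_le_pow_left₀ (by positivity) hv 2
  set s := lam / (4 * v ^ 2) with hs
  have hsb : s ^ 2 * b ^ 2 ≤ 1 / 2 := by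
    have h8 : (lam * b) ^ 2 < 8 * (v ^ 2) ^ 2 := by
      calc (lam * b) ^ 2 < (2 * √2 * v ^ 2) ^ 2 :=
            pow_lt_pow_left₀ hlamb (by positivity) two_ne_zero
        _ = 8 * (v ^ 2) ^ 2 := by rw [mul_pow, mul_pow, sq_sqrt zero_le_two]; ring
    rw [hs, div_pow, div_mul_eq_mul_div, div_le_iff₀ (by positivity)]
    nlinarith
  refine (laplaceMeasure_pi_lt_sum_le hb (by positivity) hsb lam).trans ?_
  gcongr
  calc -(s * lam) + 2 * Fintype.card ι * s ^ 2 * b ^ 2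
      ≤ -(s * lam) + 2 * s ^ 2 * v ^ 2 := by nlinarith [sq_nonneg s]
    _ = -lam ^ 2 / (8 * v ^ 2) := by rw [hs]; field_simp; ring

theorem laplace_sum_tail_iterated_bound_general (b : ℝ) (hb : 0 < b) (k t : ℕ) (v : ℝ)
    (hv : Real.sqrt k * b ≤ v) (lam : ℝ) (hlam₁ : 0 < lam)
    (hlam₂ : lam < 2 * Real.sqrt 2 * v ^ 2 / b) :
    Measure.pi (fun _ : Fin t => Measure.pi (fun _ : Fin k => laplaceMeasure b))
        {ω : Fin t → Fin k → ℝ | ∀ j, lam < ∑ i, ω j i} ≤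
      ENNReal.ofReal (Real.exp (-(t * lam ^ 2) / (8 * v ^ 2))) := by
  have := isProbabilityMeasure_laplaceMeasure hb
  have hset : {ω : Fin t → Fin k → ℝ | ∀ j, lam < ∑ i, ω j i} =
      univ.pi fun _ => {x | lam < ∑ i, x i} := by
    ext
    simp
  rw [hset, Measure.pi_pi, Finset.prod_const, Finset.card_univ, Fintype.card_fin]
  calc _ ≤ ENNReal.ofReal (exp (-lam ^ 2 / (8 * v ^ 2))) ^ t := by
        gcongr
        exact laplace_sum_tail_bound hb (by simpa using hv) hlam₁ hlam₂
    _ = ENNReal.ofReal (exp (-(t * lam ^ 2) / (8 * v ^ 2))) := by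
        rw [← ENNReal.ofReal_pow (exp_pos _).le, ← exp_nat_mul]
        ring_nf

theorem laplace_sum_tail_iterated_bound (b : ℝ) (hb : 0 < b) (k t : ℕ) (hk : 1 ≤ k)
    (ht : 1 ≤ t) (v : ℝ) (hv : Real.sqrt k * b ≤ v) (lam : ℝ) (hlam₁ : 0 < lam)
    (hlam₂ : lam < 2 * Real.sqrt 2 * v ^ 2 / b) :
    Measure.pi (fun _ : Fin t => Measure.pi (fun _ : Fin k => laplaceMeasure b))
        {ω : Fin t → Fin k → ℝ | ∀ j, lam < ∑ i, ω j i} ≤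
      ENNReal.ofReal (Real.exp (-(t * lam ^ 2) / (8 * v ^ 2))) :=
  laplace_sum_tail_iterated_bound_general b hb k t v hv lam hlam₁ hlam₂
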